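/- arXiv:1307.1728 — 5 statements merged into one kernel-verified Lean document; each statement's English description precedes it below -/
import Mathlib

section
/- For every natural number n, the ordinary generating function identity ∑_{m ≥ 0} S(n+m, n) x^m = ∏_{y=1}^{n} 1/(1 − x·y) holds as an identity of formal power series over ℚ; equivalently, the formal power series (∏_{y=1}^{n} (1 − y·X)) · (∑_{m ≥ 0} S(n+m, n) X^m) equals 1 in ℚ⟦X⟧. -/
/-!
Recording which block the new element `a` joins (possibly a new block `{a}`) identifies the
partitions of `insert a s` with pairs of a partition `Q` of `s` and an element of
`insert ∅ Q.parts`. Counting these pairs gives `S(n+1, k+1) = (k+1) S(n, k+1) + S(n, k)`, which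
says that the column generating functions `F_k = ∑ₘ S(k+m, k) Xᵐ` satisfy
`(1 - (k+1) X) F_{k+1} = F_k`. Since `F_0 = 1`, the product telescopes.
-/

/-- Stirling number of the second kind: the number of partitions of an
`n`-element set into `k` nonempty blocks. -/
noncomputable def stirling2 (n k : ℕ) : ℕ :=
  Nat.card {P : Finpartition (Finset.univ : Finset (Fin n)) // P.parts.card = k}

section

open Finset

namespace Finpartition

variable {α : Type*} [DecidableEq α] {s t : Finset α} {a : α}

lemma subset_of_mem_insert_empty (Q : Finpartition s) (ht : t ∈ insert ∅ Q.parts) :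
    t ⊆ s := by
  rcases mem_insert.1 ht with rfl | ht
  exacts [empty_subset s, Q.subset ht]

/-- `t = ∅` encodes the new block `{a}`. -/
def insertInto (Q : Finpartition s) (ha : a ∉ s) (ht : t ∈ insert ∅ Q.parts) :
    Finpartition (insert a s) where
  parts := insert (insert a t) (Q.parts.erase t)
  supIndep := by
    rw [supIndep_iff_pairwiseDisjoint, coe_insert]
    refine (Q.disjoint.subset (erase_subset t Q.parts)).insert fun u hu _ => ?_
    rw [mem_coe, mem_erase] at hu
    refine disjoint_insert_left.2 ⟨fun hau => ha (Q.le hu.2 hau), ?_⟩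
    rcases mem_insert.1 ht with rfl | ht
    · exact disjoint_empty_left u
    · exact Q.disjoint ht hu.2 (Ne.symm hu.1)
  sup_parts := by
    have hblocks : t ∪ (Q.parts.erase t).sup id = s := by
      rcases mem_insert.1 ht with rfl | ht
      · rw [erase_eq_of_notMem Q.empty_notMem_parts, Q.sup_parts, empty_union]
      · conv_rhs => rw [← Q.sup_parts, ← insert_erase ht, sup_insert, id, sup_eq_union]
    rw [sup_insert, id, sup_eq_union, insert_union, hblocks]
  bot_notMem h := by
    rcases mem_insert.1 h with h | h
    exacts [insert_ne_empty a t h.symm, Q.bot_notMem (mem_of_mem_erase h)]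

lemma parts_insertInto (Q : Finpartition s) (ha : a ∉ s) (ht : t ∈ insert ∅ Q.parts) :
    (Q.insertInto ha ht).parts = insert (insert a t) (Q.parts.erase t) :=
  rfl

lemma part_insertInto (Q : Finpartition s) (ha : a ∉ s) (ht : t ∈ insert ∅ Q.parts) :
    (Q.insertInto ha ht).part a = insert a t :=
  part_eq_of_mem _ (mem_insert_self _ _) (mem_insert_self a t)

lemma card_parts_insertInto (Q : Finpartition s) (ha : a ∉ s) (ht : t ∈ insert ∅ Q.parts) :
    #(Q.insertInto ha ht).parts = if t = ∅ then #Q.parts + 1 else #Q.parts := by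
  rw [parts_insertInto, card_insert_of_notMem fun h =>
    ha (Q.subset (mem_of_mem_erase h) (mem_insert_self a t))]
  split_ifs with h
  · rw [h, erase_eq_of_notMem Q.empty_notMem_parts]
  · have ht' : t ∈ Q.parts := (mem_insert.1 ht).resolve_left h
    rw [card_erase_add_one ht']

/-- Removes `a` from its block, dropping that block if it was `{a}`. -/
def erase (P : Finpartition (insert a s)) (ha : a ∉ s) : Finpartition s :=
  (P.avoid {a}).copy (by rw [sdiff_singleton_eq_erase, erase_insert ha])

lemma parts_erase (P : Finpartition (insert a s)) (ha : a ∉ s) :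
    (P.erase ha).parts = (P.parts.image (·.erase a)).erase ∅ := by
  show (P.parts.image (· \ {a})).erase ∅ = _
  simp_rw [sdiff_singleton_eq_erase]

lemma erase_part_mem (P : Finpartition (insert a s)) (ha : a ∉ s) :
    (P.part a).erase a ∈ insert ∅ (P.erase ha).parts := by
  rw [parts_erase, mem_insert, mem_erase, mem_image]
  by_cases h : (P.part a).erase a = ∅
  · exact .inl h
  · exact .inr ⟨h, P.part a, P.part_mem.2 (mem_insert_self a s), rfl⟩

lemma erase_insertInto (Q : Finpartition s) (ha : a ∉ s) (ht : t ∈ insert ∅ Q.parts) :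
    (Q.insertInto ha ht).erase ha = Q := by
  have hfix : (Q.parts.erase t).image (·.erase a) = Q.parts.erase t := by
    conv_rhs => rw [← image_id (s := Q.parts.erase t)]
    exact image_congr fun u hu =>
      erase_eq_of_notMem fun h => ha (Q.subset (mem_of_mem_erase hu) h)
  ext1
  rw [parts_erase, parts_insertInto, image_insert, hfix,
    erase_insert fun h => ha (Q.subset_of_mem_insert_empty ht h)]
  rcases mem_insert.1 ht with rfl | ht
  · rw [erase_insert (notMem_erase ∅ Q.parts), erase_eq_of_notMem Q.empty_notMem_parts]
  · rw [insert_erase ht, erase_eq_of_notMem Q.empty_notMem_parts]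

lemma insertInto_erase (P : Finpartition (insert a s)) (ha : a ∉ s) :
    (P.erase ha).insertInto ha (P.erase_part_mem ha) = P := by
  set p := P.part a
  have hp : p ∈ P.parts := P.part_mem.2 (mem_insert_self a s)
  have hap : a ∈ p := P.mem_part (mem_insert_self a s)
  have hrest : ∀ u ∈ P.parts.erase p, a ∉ u := fun u hu hau =>
    (mem_erase.1 hu).1 (P.part_eq_of_mem (mem_of_mem_erase hu) hau).symm
  have hfix : (P.parts.erase p).image (·.erase a) = P.parts.erase p := by
    conv_rhs => rw [← image_id (s := P.parts.erase p)]
    exact image_congr fun u hu => erase_eq_of_notMem (hrest u hu)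
  have hnew : p.erase a ∉ P.parts.erase p := fun h => by
    obtain ⟨b, hb⟩ := P.nonempty_of_mem_parts (mem_of_mem_erase h)
    have := P.eq_of_mem_parts (mem_of_mem_erase h) hp hb (mem_of_mem_erase hb)
    exact notMem_erase a p (by rwa [this])
  ext1
  rw [parts_insertInto, parts_erase, ← insert_erase hp, image_insert, hfix, insert_erase hap,
    erase_right_comm, erase_insert hnew,
    erase_eq_of_notMem fun h => P.empty_notMem_parts (mem_of_mem_erase h)]

def insertEquiv (ha : a ∉ s) :
    Finpartition (insert a s) ≃ Σ Q : Finpartition s, ↥(insert ∅ Q.parts) where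
  toFun P := ⟨P.erase ha, _, P.erase_part_mem ha⟩
  invFun x := x.1.insertInto ha x.2.2
  left_inv P := P.insertInto_erase ha
  right_inv x := Sigma.subtype_ext (x.1.erase_insertInto ha x.2.2) <| by
    simp only [part_insertInto]
    exact erase_insert fun h => ha (x.1.subset_of_mem_insert_empty x.2.2 h)

theorem card_filter_card_parts_insert (ha : a ∉ s) (k : ℕ) :
    #{P : Finpartition (insert a s) | #P.parts = k + 1} =
      (k + 1) * #{Q : Finpartition s | #Q.parts = k + 1} +
        #{Q : Finpartition s | #Q.parts = k} := by
  simp only [card_filter]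
  rw [← (insertEquiv ha).symm.sum_comp, Fintype.sum_sigma, mul_sum, ← sum_add_distrib]
  refine sum_congr rfl fun Q _ => ?_
  simp only [insertEquiv, Equiv.coe_fn_symm_mk, card_parts_insertInto]
  rw [sum_coe_sort (insert ∅ Q.parts) fun t =>
      if (if t = ∅ then #Q.parts + 1 else #Q.parts) = k + 1 then 1 else 0,
    sum_insert Q.empty_notMem_parts, if_pos rfl,
    sum_congr rfl fun t ht => by rw [if_neg (Q.ne_empty ht)], sum_const, smul_eq_mul, add_comm]
  congr 1
  · split_ifs with h <;> simp [h]
  · simp only [Nat.add_right_cancel_iff]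

theorem card_filter_card_parts_eq_stirlingSecond (s : Finset α) (k : ℕ) :
    #{P : Finpartition s | #P.parts = k} = Nat.stirlingSecond #s k := by
  induction s using Finset.induction_on generalizing k with
  | empty =>
    have hparts (P : Finpartition (∅ : Finset α)) : P.parts = ∅ := P.parts_eq_empty_iff.2 rfl
    cases k with
    | zero =>
      simp only [hparts, card_empty, filter_true, card_univ, Nat.stirlingSecond_zero]
      exact Fintype.card_unique (α := Finpartition (⊥ : Finset α))
    | succ k => simp [hparts]
  | insert a s ha ih =>
    cases k with
    | zero =>
      rw [card_insert_of_notMem ha, Nat.stirlingSecond_succ_zero, card_eq_zero, filter_eq_empty_iff]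
      exact fun P _ => (P.parts_nonempty (insert_ne_empty a s)).card_pos.ne'
    | succ k =>
      rw [card_filter_card_parts_insert ha, ih, ih, card_insert_of_notMem ha,
        Nat.stirlingSecond_succ_succ]

end Finpartition

theorem stirling2_eq_stirlingSecond (n k : ℕ) : stirling2 n k = Nat.stirlingSecond n k := by
  rw [stirling2, Nat.card_eq_fintype_card, Fintype.card_subtype,
    Finpartition.card_filter_card_parts_eq_stirlingSecond, card_univ, Fintype.card_fin]

end

section

open PowerSeries

variable {R : Type*} [CommRing R]

theorem one_sub_mul_X_mul_mk_stirlingSecond (k : ℕ) :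
    (1 - ((k + 1 : ℕ) : R⟦X⟧) * X) *
        mk (fun m => (Nat.stirlingSecond (k + 1 + m) (k + 1) : R)) =
      mk fun m => (Nat.stirlingSecond (k + m) k : R) := by
  ext (_ | m)
  · simp [Nat.stirlingSecond_self]
  · rw [sub_mul, one_mul, mul_assoc, ← map_natCast C, map_sub, coeff_C_mul, coeff_succ_X_mul]
    simp only [coeff_mk, ← add_assoc, Nat.stirlingSecond_succ_succ, Nat.add_right_comm k 1 m]
    push_cast
    ring

theorem prod_one_sub_mul_X_mul_mk_stirlingSecond (n : ℕ) :
    (∏ y ∈ Finset.Icc 1 n, (1 - (y : R⟦X⟧) * X)) *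
      mk (fun m => (Nat.stirlingSecond (n + m) n : R)) = 1 := by
  induction n with
  | zero =>
    ext (_ | m) <;> simp [coeff_one]
  | succ n ih =>
    rw [Finset.prod_Icc_succ_top (Nat.le_add_left 1 n), mul_assoc,
      one_sub_mul_X_mul_mk_stirlingSecond, ih]

end

open PowerSeries in
/-- `∑_{m ≥ 0} S(n+m, n) x^m = ∏_{y=1}^{n} 1/(1 − x·y)` as formal power series
over `ℚ`, stated as `(∏_{y=1}^{n} (1 − y·X)) · (∑_{m≥0} S(n+m,n) X^m) = 1`. -/
theorem stirling2_ogf (n : ℕ) :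
    (∏ y ∈ Finset.Icc 1 n, (1 - (y : ℚ⟦X⟧) * PowerSeries.X)) *
      PowerSeries.mk (fun m => (stirling2 (n + m) n : ℚ)) = 1 := by
  simp only [stirling2_eq_stirlingSecond]
  exact prod_one_sub_mul_X_mul_mk_stirlingSecond n
end

section
/- For every natural number n, the exponential generating function identity (e^X − 1)^n = n! · ∑_{m ≥ 0} (S(m, n)/m!) X^m holds as an identity of formal power series over ℚ, where e^X denotes the formal exponential power series. -/
/-!
Multiplied by `m!`, the `m`-th coefficients of both sides count surjections `Fin m → Fin n`.
A partition of `Fin m` into `n` blocks together with a bijection from `Fin n` to its blocks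
is the same as a surjection, so there are `n! S(m, n)` of them. By inclusion–exclusion over
the set of missed values there are `∑ₖ (-1)ᵏ C(n, k) (n - k)ᵐ`, which is `m!` times the
`m`-th coefficient of `(e^X - 1)^n = ∑ₖ (-1)ᵏ C(n, k) e^{(n - k) X}`.
-/

open Nat

open Finset Function PowerSeries

namespace Finpartition

variable {α β : Type*} [DecidableEq α] {s : Finset α}

theorem parts_eq_image_part (P : Finpartition s) : P.parts = s.image P.part := by
  ext t
  simp only [mem_image]
  constructor
  · intro ht
    obtain ⟨a, ha⟩ := P.nonempty_of_mem_parts ht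
    exact ⟨a, P.le ht ha, P.part_eq_of_mem ht ha⟩
  · rintro ⟨a, ha, rfl⟩
    exact P.part_mem.2 ha

theorem ext_part {P Q : Finpartition s} (h : ∀ a ∈ s, P.part a = Q.part a) : P = Q := by
  ext1
  rw [parts_eq_image_part, parts_eq_image_part]
  exact image_congr h

variable [Fintype α]

def partOf (P : Finpartition (univ : Finset α)) (a : α) : P.parts :=
  ⟨P.part a, P.part_mem.2 (mem_univ a)⟩

theorem partOf_surjective (P : Finpartition (univ : Finset α)) : Surjective P.partOf := by
  rintro ⟨t, ht⟩
  obtain ⟨a, -, hat⟩ := P.part_surjOn ht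
  exact ⟨a, Subtype.ext hat⟩

def labelling (P : Finpartition (univ : Finset α)) (e : β ≃ P.parts) : α → β :=
  e.symm ∘ P.partOf

theorem labelling_surjective (P : Finpartition (univ : Finset α)) (e : β ≃ P.parts) :
    Surjective (P.labelling e) :=
  e.symm.surjective.comp P.partOf_surjective

theorem mem_part_iff_labelling_eq (P : Finpartition (univ : Finset α)) (e : β ≃ P.parts)
    {a b : α} : b ∈ P.part a ↔ P.labelling e b = P.labelling e a := by
  rw [labelling, comp_apply, comp_apply, e.symm.injective.eq_iff, partOf, partOf,
    Subtype.mk.injEq, P.mem_part_iff_part_eq_part (mem_univ b) (mem_univ a)]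

variable [DecidableEq β]

theorem part_ofSetoid_ker (f : α → β) (a : α) :
    (ofSetoid (Setoid.ker f)).part a = ({b | f b = f a} : Finset α) := by
  ext b
  rw [mem_part_ofSetoid_iff_rel, mem_filter, Setoid.ker_def]
  simp [eq_comm]

theorem fiber_mem_parts_ofSetoid_ker {f : α → β} (hf : Surjective f) (b : β) :
    ({a | f a = b} : Finset α) ∈ (ofSetoid (Setoid.ker f)).parts := by
  obtain ⟨a, rfl⟩ := hf b
  rw [← part_ofSetoid_ker]
  exact (ofSetoid (Setoid.ker f)).part_mem.2 (mem_univ a)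

noncomputable def fiberEquiv {f : α → β} (hf : Surjective f) :
    β ≃ (ofSetoid (Setoid.ker f)).parts :=
  Equiv.ofBijective (fun b => ⟨({a | f a = b} : Finset α), fiber_mem_parts_ofSetoid_ker hf b⟩) <| by
    constructor
    · intro b b' h
      obtain ⟨a, rfl⟩ := hf b
      simpa using Finset.ext_iff.1 (congrArg Subtype.val h) a
    · rintro ⟨t, ht⟩
      obtain ⟨a, -, rfl⟩ := (ofSetoid (Setoid.ker f)).part_surjOn ht
      exact ⟨f a, Subtype.ext (part_ofSetoid_ker f a).symm⟩

theorem labelling_fiberEquiv {f : α → β} (hf : Surjective f) :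
    (ofSetoid (Setoid.ker f)).labelling (fiberEquiv hf) = f := by
  funext a
  rw [labelling, comp_apply, Equiv.symm_apply_eq]
  exact Subtype.ext (part_ofSetoid_ker f a)

variable (α β) in
def labelledSurjection :
    (Σ P : Finpartition (univ : Finset α), β ≃ P.parts) → {f : α → β // Surjective f} :=
  fun q => ⟨q.1.labelling q.2, q.1.labelling_surjective q.2⟩

theorem labelledSurjection_bijective : Bijective (labelledSurjection α β) := by
  constructor
  · rintro ⟨P, e⟩ ⟨Q, e'⟩ h
    have h : P.labelling e = Q.labelling e' := congrArg Subtype.val h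
    obtain rfl : P = Q := ext_part fun a _ => by
      ext b
      rw [mem_part_iff_labelling_eq P e, mem_part_iff_labelling_eq Q e', h]
    obtain rfl : e = e' := by
      refine Equiv.symm_bijective.injective (Equiv.ext fun t => ?_)
      obtain ⟨a, rfl⟩ := P.partOf_surjective t
      exact congrFun h a
    rfl
  · rintro ⟨f, hf⟩
    exact ⟨⟨_, fiberEquiv hf⟩, Subtype.ext (labelling_fiberEquiv hf)⟩

end Finpartition

theorem Fintype.card_equiv_eq_ite {β γ : Type*} [Fintype β] [DecidableEq β] [Fintype γ]
    [DecidableEq γ] :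
    Fintype.card (β ≃ γ) = if Fintype.card β = Fintype.card γ then (Fintype.card β)! else 0 := by
  split_ifs with h
  · exact Fintype.card_equiv (Fintype.equivOfCardEq h)
  · exact Fintype.card_eq_zero_iff.2 ⟨fun e => h (Fintype.card_congr e)⟩

section Surjections

variable {α β : Type*} [Fintype α] [DecidableEq α] [Fintype β] [DecidableEq β]

theorem card_surjective_eq_card_finpartition_mul_factorial :
    Nat.card {f : α → β // Surjective f} =
      Nat.card {P : Finpartition (univ : Finset α) // #P.parts = Fintype.card β} *
        (Fintype.card β)! := by
  rw [← Nat.card_eq_of_bijective _ Finpartition.labelledSurjection_bijective,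
    Nat.card_eq_fintype_card, Fintype.card_sigma, Nat.card_eq_fintype_card, Fintype.card_subtype]
  simp only [Fintype.card_equiv_eq_ite, Fintype.card_coe]
  rw [sum_ite, sum_const_zero, add_zero, sum_const, smul_eq_mul]
  simp only [eq_comm]

theorem card_surjective_eq_alternating_sum :
    (Nat.card {f : α → β // Surjective f} : ℤ) = ∑ k ∈ range (Fintype.card β + 1),
      (-1 : ℤ) ^ k * (Fintype.card β).choose k * ((Fintype.card β - k) ^ Fintype.card α : ℕ) := by
  let avoid (b : β) : Finset (α → β) := {f | ∀ a, f a ≠ b}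
  have hsurj : ({f | Surjective f} : Finset (α → β)) = univ.inf fun b => (avoid b)ᶜ := by
    ext f
    simp only [mem_filter, mem_univ, true_and, mem_inf, mem_compl, avoid]
    simp [Surjective]
  have hinf (t : Finset β) : t.inf avoid = Fintype.piFinset fun _ => tᶜ := by
    ext f
    simp only [mem_inf, avoid, mem_filter, mem_univ, true_and, Fintype.mem_piFinset, mem_compl]
    grind
  rw [Nat.card_eq_fintype_card, Fintype.card_subtype, hsurj, inclusion_exclusion_card_inf_compl]
  simp only [hinf, Fintype.card_piFinset, prod_const, card_compl, Finset.card_univ]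
  rw [sum_powerset_apply_card
    (fun k => (-1 : ℤ) ^ k * ((Fintype.card β - k) ^ Fintype.card α : ℕ)), Finset.card_univ]
  simp only [nsmul_eq_mul, mul_assoc, mul_left_comm]

end Surjections

theorem coeff_exp_pow (k m : ℕ) : coeff m (exp ℚ ^ k) = (k : ℚ) ^ m / m ! := by
  rw [exp_pow_eq_rescale_exp, coeff_rescale, coeff_exp, Algebra.algebraMap_self_apply, mul_one_div]

theorem coeff_exp_sub_one_pow (n m : ℕ) :
    coeff m ((exp ℚ - 1) ^ n) =
      ((∑ k ∈ range (n + 1), (-1 : ℤ) ^ k * n.choose k * ((n - k) ^ m : ℕ) : ℤ) : ℚ) / m ! := by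
  rw [sub_eq_neg_add, add_pow, map_sum, Int.cast_sum, sum_div]
  refine sum_congr rfl fun k hk => ?_
  have hterm : (-1 : ℚ⟦X⟧) ^ k * exp ℚ ^ (n - k) * (n.choose k : ℚ⟦X⟧) =
      ((-1) ^ k * n.choose k : ℚ) • exp ℚ ^ (n - k) := by
    rw [Algebra.smul_def, map_mul, map_pow, map_neg, map_one, map_natCast]
    ring
  rw [hterm, map_smul, coeff_exp_pow, smul_eq_mul]
  push_cast [Nat.cast_sub (mem_range_succ_iff.1 hk)]
  ring

theorem stirling2_mul_factorial (m n : ℕ) :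
    stirling2 m n * n ! = Nat.card {f : Fin m → Fin n // Surjective f} := by
  rw [card_surjective_eq_card_finpartition_mul_factorial, Fintype.card_fin, stirling2]

/-- `(e^X − 1)^n = n! · ∑_{m ≥ 0} (S(m, n)/m!) X^m` as formal power series over `ℚ`. -/
theorem stirling2_egf (n : ℕ) :
    (PowerSeries.exp ℚ - 1) ^ n =
      (n ! : ℚ) • PowerSeries.mk (fun m => (stirling2 m n : ℚ) / (m ! : ℚ)) := by
  ext m
  have hcount := card_surjective_eq_alternating_sum (α := Fin m) (β := Fin n)
  rw [← stirling2_mul_factorial, Fintype.card_fin, Fintype.card_fin] at hcount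
  rw [coeff_exp_sub_one_pow, ← hcount, map_smul, coeff_mk, smul_eq_mul]
  push_cast
  ring
end

section
/- Let y be a real number with 0 < y < 1 and let n ≥ 2 be a natural number. Then the n-th derivative at 0 of the function x ↦ ln(e^x − y) equals (−1)^{n−1} · y/(1−y)^n · ∑_{σ} y^{des(σ)}, where the sum is over all permutations σ of the set {1, …, n−1} and des(σ) = #{ i : 1 ≤ i ≤ n−2, σ(i) > σ(i+1) } is the number of descents of σ. (Equivalently, the Taylor coefficient [x^n] ln(e^x − y) equals (−1)^{n−1} y A_{n−1}(y)/(n!(1−y)^n), where A_m(y) = ∑_{σ ∈ S_m} y^{des(σ)} is the Eulerian polynomial, whose coefficients are the Eulerian numbers.) -/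
/-!
Write `T = y e^{-x}`, so that `d/dx log (e^x - y) = 1 / (1 - T) = 1 + T / (1 - T)` and `d/dx`
acts on functions of `T` as `-T d/dT`. The Eulerian recurrence
`A_{m+1} = (1 + m t) A_m + t (1 - t) A_m'` says precisely that `t d/dt` sends
`t A_m(t) / (1 - t)^(m+1)` to `t A_{m+1}(t) / (1 - t)^(m+2)`, so the higher derivatives of
`log (e^x - y)` are these fractions evaluated at `T`, up to sign.

The recurrence comes from inserting the largest letter into a permutation `σ ∈ S_m` with `d`
descents: inserting it at the end or inside one of the `d` descents keeps the number of descents,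
while each of the other `m - d` positions creates a new one.
-/

def descNum {m : ℕ} (σ : Equiv.Perm (Fin m)) : ℕ :=
  (Finset.univ.filter fun p : Fin m × Fin m =>
    (p.1 : ℕ) + 1 = (p.2 : ℕ) ∧ σ p.2 < σ p.1).card

open Finset Equiv Polynomial Real

section Descents

variable {α : Type*} [LinearOrder α] {m : ℕ}

def numDescents (f : Fin (m + 1) → α) : ℕ := #{i : Fin m | f i.succ < f i.castSucc}

theorem numDescents_cons (a : α) (f : Fin (m + 1) → α) :
    numDescents (Fin.cons a f : Fin (m + 2) → α) = numDescents f + if f 0 < a then 1 else 0 := by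
  simp only [numDescents, card_filter, Fin.sum_univ_succ]
  simp [add_comm]

theorem numDescents_cons_of_lt {a : α} {f : Fin (m + 1) → α} (h : f 0 < a) :
    numDescents (Fin.cons a f : Fin (m + 2) → α) = numDescents f + 1 := by
  rw [numDescents_cons, if_pos h]

theorem numDescents_comp_strictMono {β : Type*} [LinearOrder β] {g : α → β} (hg : StrictMono g)
    (f : Fin (m + 1) → α) : numDescents (g ∘ f) = numDescents f := by
  simp [numDescents, hg.lt_iff_lt]

theorem descNum_eq_numDescents (σ : Perm (Fin (m + 1))) : descNum σ = numDescents σ := by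
  refine (card_bij (fun i _ => (i.castSucc, i.succ)) ?_ ?_ ?_).symm
  · intro i hi
    simpa using hi
  · intro i _ j _ h
    simpa using h
  · rintro ⟨a, b⟩ hab
    obtain ⟨hab, hlt⟩ : (a : ℕ) + 1 = b ∧ σ b < σ a := by simpa using hab
    have hb : (⟨a, by omega⟩ : Fin m).succ = b := Fin.ext hab
    exact ⟨⟨a, by omega⟩, by simpa [hb] using hlt, by simp [hb]⟩

theorem sum_pow_numDescents_insertNth {R : Type*} [CommRing R] (t : R) {a : α}
    (f : Fin (m + 1) → α) (ha : ∀ i, f i < a) :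
    ∑ p : Fin (m + 2), t ^ numDescents (Fin.insertNth p a f) =
      (numDescents f + 1) * t ^ numDescents f +
        (m + 1 - numDescents f) * t ^ (numDescents f + 1) := by
  induction m with
  | zero =>
    have hlast : (Fin.insertNth 1 a f : Fin 2 → α) = Fin.cons (f 0) (fun _ : Fin 1 => a) := by
      ext j; fin_cases j <;> rfl
    rw [Fin.sum_univ_two, Fin.insertNth_zero', numDescents_cons_of_lt (ha 0), hlast,
      numDescents_cons, if_neg (ha 0).not_gt]
    simp [numDescents, add_comm]
  | succ m ih =>
    obtain ⟨b, g, rfl⟩ : ∃ b g, f = Fin.cons b g := ⟨f 0, Fin.tail f, (Fin.cons_self_tail f).symm⟩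
    have hg : ∀ i, g i < a := fun i => by simpa using ha i.succ
    have hab : ¬ a < b := (by simpa using ha 0 : b < a).not_gt
    have hins0 : ∀ r : Fin (m + 1), (Fin.insertNth r.succ a g : Fin (m + 2) → α) 0 = g 0 :=
      fun r => by simpa using Fin.insertNth_apply_succAbove (α := fun _ => α) r.succ a g 0
    have ih := ih g hg
    rw [Fin.sum_univ_succ, Fin.insertNth_zero', numDescents_cons_of_lt (hg 0)] at ih
    rw [Fin.sum_univ_succ, Fin.insertNth_zero', numDescents_cons_of_lt (ha 0)]
    simp only [Fin.insertNth_succ_cons, numDescents_cons]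
    rw [Fin.sum_univ_succ, Fin.insertNth_zero', numDescents_cons_of_lt (hg 0)]
    simp only [hins0, Fin.cons_zero, if_neg hab, add_zero]
    split_ifs
    · simp only [pow_succ, ← Finset.sum_mul]
      push_cast
      linear_combination t * ih
    · simp only [add_zero]
      push_cast
      linear_combination ih

end Descents

def insertMax {m : ℕ} (σ : Perm (Fin m)) (p : Fin (m + 1)) : Perm (Fin (m + 1)) :=
  (finSuccEquiv' p).trans ((optionCongr σ).trans (finSuccEquiv' (Fin.last m)).symm)

theorem coe_insertMax {m : ℕ} (σ : Perm (Fin m)) (p : Fin (m + 1)) :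
    ⇑(insertMax σ p) = Fin.insertNth p (Fin.last m) (Fin.castSucc ∘ σ) := by
  ext j
  cases j using Fin.succAboveCases p with
  | x => simp [insertMax, finSuccEquiv'_at]
  | p j => simp [insertMax, finSuccEquiv'_succAbove, Fin.succAbove_last]

theorem insertMax_bijective {m : ℕ} :
    Function.Bijective fun q : Perm (Fin m) × Fin (m + 1) => insertMax q.1 q.2 := by
  refine (Fintype.bijective_iff_injective_and_card _).2 ⟨?_, ?_⟩
  · rintro ⟨σ, p⟩ ⟨τ, q⟩ h
    dsimp only at h
    have hmax : ∀ σ p, (insertMax σ p).symm (Fin.last m) = p := fun σ p =>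
      (Equiv.symm_apply_eq _).2 (by simp [coe_insertMax])
    obtain rfl : p = q := by rw [← hmax σ p, ← hmax τ q, h]
    have hστ : Fin.castSucc ∘ ⇑σ = Fin.castSucc ∘ ⇑τ := by
      simpa [coe_insertMax] using congrArg DFunLike.coe h
    rw [(Fin.castSucc_injective m).comp_left.eq_iff, DFunLike.coe_fn_eq] at hστ
    rw [hστ]
  · simp [Fintype.card_perm, Nat.factorial_succ, mul_comm]

section EulerianPoly

variable (R : Type*) [CommRing R]

noncomputable def eulerianPoly (m : ℕ) : R[X] :=
  ∑ σ : Perm (Fin m), X ^ descNum σ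

variable {R} in
theorem eval_eulerianPoly (m : ℕ) (t : R) :
    (eulerianPoly R m).eval t = ∑ σ : Perm (Fin m), t ^ descNum σ := by
  simp [eulerianPoly, eval_finsetSum]

theorem eulerianPoly_succ (m : ℕ) :
    eulerianPoly R (m + 1) =
      (1 + (m : R[X]) * X) * eulerianPoly R m + X * (1 - X) * derivative (eulerianPoly R m) := by
  cases m with
  | zero => simp [eulerianPoly, descNum]
  | succ m =>
    have hX : ∀ d : ℕ, (X : R[X]) * derivative (X ^ d) = (d : R[X]) * X ^ d := fun d => by
      cases d with
      | zero => simp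
      | succ d => rw [derivative_X_pow_succ, ← C_eq_natCast, pow_succ]; simp; ring
    calc eulerianPoly R (m + 2)
        = ∑ σ : Perm (Fin (m + 1)), ∑ p : Fin (m + 2),
            X ^ numDescents (Fin.insertNth p (Fin.last _) (Fin.castSucc ∘ σ)) := by
          rw [eulerianPoly, ← insertMax_bijective.sum_comp, Fintype.sum_prod_type]
          simp [descNum_eq_numDescents, coe_insertMax]
      _ = ∑ σ : Perm (Fin (m + 1)), (((descNum σ : R[X]) + 1) * X ^ descNum σ +
            ((m : R[X]) + 1 - (descNum σ : R[X])) * X ^ (descNum σ + 1)) := by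
          refine sum_congr rfl fun σ _ => ?_
          rw [sum_pow_numDescents_insertNth _ (Fin.castSucc ∘ σ) fun i =>
              Fin.castSucc_lt_last (σ i),
            numDescents_comp_strictMono Fin.strictMono_castSucc, ← descNum_eq_numDescents]
      _ = _ := by
          simp only [eulerianPoly, derivative_sum, mul_sum, ← sum_add_distrib]
          refine sum_congr rfl fun σ _ => ?_
          push_cast
          linear_combination (X - 1) * hX (descNum σ)

end EulerianPoly

noncomputable def eulerianFrac (m : ℕ) (t : ℝ) : ℝ :=
  t * (eulerianPoly ℝ m).eval t / (1 - t) ^ (m + 1)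

theorem eulerianFrac_zero (t : ℝ) : eulerianFrac 0 t = t / (1 - t) := by
  simp [eulerianFrac, eulerianPoly, descNum]

theorem hasDerivAt_eulerianFrac_mul_exp (m : ℕ) {c s : ℝ} (h : c * exp s ≠ 1) :
    HasDerivAt (fun s => eulerianFrac m (c * exp s)) (eulerianFrac (m + 1) (c * exp s)) s := by
  have h1 : 1 - c * exp s ≠ 0 := sub_ne_zero.2 h.symm
  have hu : HasDerivAt (fun s => c * exp s) (c * exp s) s := (hasDerivAt_exp s).const_mul c
  have hA := ((eulerianPoly ℝ m).hasDerivAt (c * exp s)).comp s hu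
  have hD := (hu.const_sub 1).fun_pow (m + 1)
  refine ((hu.fun_mul hA).fun_div hD (pow_ne_zero _ h1)).congr_deriv ?_
  simp only [eulerianFrac, eulerianPoly_succ, eval_add, eval_mul, eval_one, eval_natCast, eval_X,
    eval_sub, Function.comp_apply, Nat.add_sub_cancel, Nat.cast_add_one]
  field_simp
  ring

theorem hasDerivAt_log_exp_sub {x y : ℝ} (h : exp x ≠ y) :
    HasDerivAt (fun x => log (exp x - y)) (1 + eulerianFrac 0 (y * exp (-x))) x := by
  have hxy : exp x - y ≠ 0 := sub_ne_zero.2 h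
  refine ((hasDerivAt_exp x).sub_const y).log hxy |>.congr_deriv ?_
  rw [eulerianFrac_zero, exp_neg]
  field_simp
  ring

theorem hasDerivAt_neg_one_pow_mul_eulerianFrac (m : ℕ) {x y : ℝ} (h : exp x ≠ y) :
    HasDerivAt (fun x => (-1) ^ m * eulerianFrac m (y * exp (-x)))
      ((-1) ^ (m + 1) * eulerianFrac (m + 1) (y * exp (-x))) x := by
  have h' : y * exp (-x) ≠ 1 := by
    rw [exp_neg, ← div_eq_mul_inv, Ne, div_eq_one_iff_eq (exp_ne_zero x)]
    exact fun hy => h hy.symm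
  exact (((hasDerivAt_eulerianFrac_mul_exp m h').comp x (hasDerivAt_neg x)).const_mul
    ((-1) ^ m)).congr_deriv (by ring)

theorem eqOn_iteratedDeriv_of_hasDerivAt {𝕜 F : Type*} [NontriviallyNormedField 𝕜]
    [NormedAddCommGroup F] [NormedSpace 𝕜 F] {g : ℕ → 𝕜 → F} {U : Set 𝕜} (hU : IsOpen U)
    (hg : ∀ m, ∀ x ∈ U, HasDerivAt (g m) (g (m + 1) x) x) (k : ℕ) :
    Set.EqOn (iteratedDeriv k (g 0)) (g k) U := by
  induction k with
  | zero => simp [Set.EqOn]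
  | succ k ih =>
    intro x hx
    rw [iteratedDeriv_succ, (ih.eventuallyEq_of_mem (hU.mem_nhds hx)).deriv_eq]
    exact (hg k x hx).deriv

theorem iteratedDeriv_log_exp_sub_eulerian_general (y : ℝ) (hy1 : y < 1)
    (n : ℕ) (hn : 2 ≤ n) :
    iteratedDeriv n (fun x : ℝ => Real.log (Real.exp x - y)) 0 =
      (-1 : ℝ) ^ (n - 1) * (y / (1 - y) ^ n) *
        ∑ σ : Equiv.Perm (Fin (n - 1)), y ^ descNum σ := by
  obtain ⟨k, rfl⟩ : ∃ k, n = k + 2 := ⟨n - 2, by omega⟩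
  set U : Set ℝ := {x | exp x ≠ y}
  have hU : IsOpen U := isOpen_ne_fun continuous_exp continuous_const
  have h0 : (0 : ℝ) ∈ U := by simpa [U] using hy1.ne'
  calc iteratedDeriv (k + 2) (fun x => log (exp x - y)) 0
      = iteratedDeriv (k + 1) (fun x => 1 + eulerianFrac 0 (y * exp (-x))) 0 := by
        rw [iteratedDeriv_succ']
        refine (Filter.EventuallyEq.iteratedDeriv ?_ (k + 1)).eq_of_nhds
        filter_upwards [hU.mem_nhds h0] with x hx using (hasDerivAt_log_exp_sub hx).deriv
    _ = iteratedDeriv (k + 1) (fun x => (-1) ^ 0 * eulerianFrac 0 (y * exp (-x))) 0 := by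
        simp [iteratedDeriv_const_add]
    _ = (-1) ^ (k + 1) * eulerianFrac (k + 1) y := by
        simpa using eqOn_iteratedDeriv_of_hasDerivAt hU
          (fun m x hx => hasDerivAt_neg_one_pow_mul_eulerianFrac m hx) (k + 1) h0
    _ = _ := by
        simp [eulerianFrac, eval_eulerianPoly]
        ring

/-- Eulerian-number expression for the derivatives of `x ↦ ln(e^x − y)`:
for `0 < y < 1` and `n ≥ 2`, the `n`-th derivative at `0` equals
`(−1)^{n−1} · y/(1−y)^n · ∑_{σ ∈ S_{n−1}} y^{des(σ)}`. -/
theorem iteratedDeriv_log_exp_sub_eulerian (y : ℝ) (hy0 : 0 < y) (hy1 : y < 1)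
    (n : ℕ) (hn : 2 ≤ n) :
    iteratedDeriv n (fun x : ℝ => Real.log (Real.exp x - y)) 0 =
      (-1 : ℝ) ^ (n - 1) * (y / (1 - y) ^ n) *
        ∑ σ : Equiv.Perm (Fin (n - 1)), y ^ descNum σ :=
  iteratedDeriv_log_exp_sub_eulerian_general y hy1 n hn
end

section
/- For every real ζ > 0 and every natural number n ≥ 2, the n-th derivative at 0 of the function x ↦ ln(e^{ζ+x} − 1) has sign (−1)^{n−1}; that is, (−1)^{n−1} · (d/dx)^n [ln(e^{ζ+x} − 1)] |_{x=0} > 0. (Consequently, for every ζ > 0 the function x ↦ (1 − e^{−ζ}) ln(e^{ζ+x} − 1) admits a sign-decomposition in which Taylor coefficients of degree ≥ 2 have alternating signs, positive for odd degree and negative for even degree, uniformly in ζ.) -/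
/-!
Write `f t = log (e^t - 1)`, so that `f' t = 1 / (1 - e^{-t})`. Since `d/dt` acts on functions of
`u = e^{-t}` as `-u d/du`, induction gives
`f^{(m+1)} t = (-1)^m Q_m(e^{-t}) / (1 - e^{-t})^{m+1}` with `Q_0 = 1` and
`Q_{m+1} = X ((1 - X) Q_m' + (m + 1) Q_m)`. The recursion keeps the coefficients of `Q_m`
nonnegative and its degree at most `m`, hence `Q_m' ≥ 0` and, inductively, `Q_m > 0` on `(0, 1)`.
At `t = ζ > 0` we have `e^{-ζ} ∈ (0, 1)`, which fixes the sign of `f^{(m+1)} ζ` as `(-1)^m`.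
-/

open Polynomial Real Topology

lemma Polynomial.eval_nonneg_of_coeff_nonneg {R : Type*} [CommSemiring R] [PartialOrder R]
    [IsOrderedRing R] {p : R[X]} (hp : ∀ k, 0 ≤ p.coeff k) {x : R} (hx : 0 ≤ x) :
    0 ≤ p.eval x := by
  rw [eval_eq_sum_range]
  exact Finset.sum_nonneg fun i _ => mul_nonneg (hp i) (pow_nonneg hx i)

/-- `eulerNumerator m / (1 - X) ^ (m + 1)` is the generating function `∑ k ^ m X ^ k`; for
`m ≥ 1`, `eulerNumerator m` is `X` times the `m`-th Eulerian polynomial. -/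
noncomputable def eulerNumerator : ℕ → ℝ[X]
  | 0 => 1
  | m + 1 => X * ((1 - X) * derivative (eulerNumerator m) + C ((m : ℝ) + 1) * eulerNumerator m)

namespace eulerNumerator

lemma coeff_succ_zero (m : ℕ) : (eulerNumerator (m + 1)).coeff 0 = 0 := by
  simp [eulerNumerator]

lemma coeff_succ_succ (m k : ℕ) :
    (eulerNumerator (m + 1)).coeff (k + 1) =
      (k + 1) * (eulerNumerator m).coeff (k + 1) + (m + 1 - k) * (eulerNumerator m).coeff k := by
  rw [eulerNumerator, coeff_X_mul]
  simp only [sub_mul, one_mul, coeff_add, coeff_sub, coeff_C_mul, coeff_derivative]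
  rcases k with _ | k
  · simp
  · rw [coeff_X_mul, coeff_derivative]
    push_cast
    ring

lemma coeff_eq_zero_of_lt {m k : ℕ} (h : m < k) : (eulerNumerator m).coeff k = 0 := by
  induction m generalizing k with
  | zero => simp [eulerNumerator, coeff_one, Nat.pos_iff_ne_zero.mp h]
  | succ m ih =>
    obtain ⟨k, rfl⟩ : ∃ j, k = j + 1 := ⟨k - 1, by omega⟩
    rw [coeff_succ_succ, ih (by omega), ih (by omega)]
    simp

lemma coeff_nonneg (m k : ℕ) : 0 ≤ (eulerNumerator m).coeff k := by
  induction m generalizing k with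
  | zero => rw [eulerNumerator, coeff_one]; split_ifs <;> norm_num
  | succ m ih =>
    rcases k with _ | k
    · simp [coeff_succ_zero]
    rw [coeff_succ_succ]
    have hk : 0 ≤ ((m : ℝ) + 1 - k) * (eulerNumerator m).coeff k := by
      rcases le_or_gt k (m + 1) with hkm | hkm
      · exact mul_nonneg (by rw [sub_nonneg]; exact_mod_cast hkm) (ih k)
      · simp [coeff_eq_zero_of_lt (by omega : m < k)]
    have := ih (k + 1)
    positivity

lemma eval_pos (m : ℕ) {u : ℝ} (hu₀ : 0 < u) (hu₁ : u < 1) :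
    0 < (eulerNumerator m).eval u := by
  induction m with
  | zero => simp [eulerNumerator]
  | succ m ih =>
    have hderiv : 0 ≤ (derivative (eulerNumerator m)).eval u :=
      eval_nonneg_of_coeff_nonneg (fun k => by
        rw [coeff_derivative]; have := coeff_nonneg m (k + 1); positivity) hu₀.le
    simp only [eulerNumerator, eval_mul, eval_add, eval_sub, eval_X, eval_one, eval_C]
    have : 0 ≤ (1 - u) * (derivative (eulerNumerator m)).eval u :=
      mul_nonneg (by linarith) hderiv
    positivity

end eulerNumerator

lemma hasDerivAt_eulerNumerator_div (m : ℕ) {t : ℝ} (ht : t ≠ 0) :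
    HasDerivAt (fun s => (eulerNumerator m).eval (exp (-s)) / (1 - exp (-s)) ^ (m + 1))
      (-((eulerNumerator (m + 1)).eval (exp (-t)) / (1 - exp (-t)) ^ (m + 2))) t := by
  set u := exp (-t)
  have hu : 1 - u ≠ 0 := by simpa [u, sub_eq_zero, eq_comm (a := (1 : ℝ))] using ht
  have hexp : HasDerivAt (fun s => exp (-s)) (-u) t := by
    simpa using (hasDerivAt_neg t).exp
  have hnum : HasDerivAt (fun s => (eulerNumerator m).eval (exp (-s)))
      ((derivative (eulerNumerator m)).eval u * -u) t :=
    ((eulerNumerator m).hasDerivAt u).comp t hexp (h₂ := fun x => (eulerNumerator m).eval x)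
  have hden := (hexp.const_sub 1).fun_pow (m + 1)
  refine (hnum.fun_div hden (pow_ne_zero _ hu)).congr_deriv ?_
  simp only [show exp (-t) = u from rfl, eulerNumerator, eval_mul, eval_add, eval_sub, eval_X,
    eval_one, eval_C, Nat.add_sub_cancel]
  field_simp
  push_cast
  ring

lemma iteratedDeriv_succ_log_exp_sub_one (m : ℕ) {t : ℝ} (ht : t ≠ 0) :
    iteratedDeriv (m + 1) (fun s => log (exp s - 1)) t =
      (-1) ^ m * ((eulerNumerator m).eval (exp (-t)) / (1 - exp (-t)) ^ (m + 1)) := by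
  induction m generalizing t with
  | zero =>
    have hlog : HasDerivAt (fun s => log (exp s - 1)) (exp t / (exp t - 1)) t :=
      ((hasDerivAt_exp t).sub_const 1).log (by simpa [sub_eq_zero] using ht)
    rw [iteratedDeriv_one, hlog.deriv, exp_neg]
    have : exp t ≠ 0 := (exp_pos t).ne'
    simp only [eulerNumerator, eval_one, zero_add, pow_one]
    field_simp
  | succ m ih =>
    have hnear : iteratedDeriv (m + 1) (fun s => log (exp s - 1)) =ᶠ[𝓝 t]
        fun s => (-1) ^ m * ((eulerNumerator m).eval (exp (-s)) / (1 - exp (-s)) ^ (m + 1)) :=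
      eventually_ne_nhds ht |>.mono fun s hs => ih hs
    rw [iteratedDeriv_succ, hnear.deriv_eq,
      ((hasDerivAt_eulerNumerator_div m ht).const_mul _).deriv]
    ring

/-- Sign of the Taylor coefficients of the saddle-point action summand: for
every `ζ > 0` and `n ≥ 2`, the `n`-th derivative at `0` of
`x ↦ ln(e^{ζ+x} − 1)` has sign `(−1)^{n−1}`. -/
theorem sign_iteratedDeriv_log_exp_sub_one (ζ : ℝ) (hζ : 0 < ζ) (n : ℕ)
    (hn : 2 ≤ n) :
    0 < (-1 : ℝ) ^ (n - 1) *
      iteratedDeriv n (fun x : ℝ => Real.log (Real.exp (ζ + x) - 1)) 0 := by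
  obtain ⟨m, rfl⟩ : ∃ m, n = m + 1 := ⟨n - 1, by omega⟩
  have hu₀ : 0 < exp (-ζ) := exp_pos _
  have hu₁ : exp (-ζ) < 1 := exp_lt_one_iff.mpr (by linarith)
  have hshift := congrFun (iteratedDeriv_comp_const_add (m + 1) (fun t => log (exp t - 1)) ζ) 0
  rw [add_zero] at hshift
  rw [hshift, iteratedDeriv_succ_log_exp_sub_one m hζ.ne', Nat.add_sub_cancel,
    ← mul_assoc, ← pow_add, Even.neg_one_pow ⟨m, rfl⟩, one_mul]
  exact div_pos (eulerNumerator.eval_pos m hu₀ hu₁) (pow_pos (by linarith) _)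
end

section
/- For every real a > 0 and every natural number k with k < a², one has ∫_a^{∞} x^k e^{−x²/2} dx ≤ a^{k−1} e^{−a²/2} · (1 − k/a²)^{−1}. -/
/-!
With `c = 1 - k/a²`, the function `G(x) = -x^{k-1} e^{-x²/2}` has derivative
`(x^k - (k-1) x^{k-2}) e^{-x²/2}`, which dominates `c x^k e^{-x²/2}` on `[a, ∞)` because
`x^{k-2} ≤ x^k / a²` there. Since `G(x) → 0`, integrating gives
`c ∫_a^∞ x^k e^{-x²/2} dx ≤ -G(a) = a^{k-1} e^{-a²/2}`.
-/

open MeasureTheory Real Set Filter Topology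

theorem hasDerivAt_zpow_mul_exp_neg_sq_div_two (m : ℤ) {x : ℝ} (hx : x ≠ 0) :
    HasDerivAt (fun x : ℝ => x ^ m * exp (-x ^ 2 / 2))
      ((m * x ^ (m - 1) - x ^ (m + 1)) * exp (-x ^ 2 / 2)) x := by
  have hexp : HasDerivAt (fun x : ℝ => exp (-x ^ 2 / 2)) (exp (-x ^ 2 / 2) * -x) x :=
    (hasDerivAt_exp _).comp x (((hasDerivAt_pow 2 x).neg.div_const 2).congr_deriv (by ring))
  refine ((hasDerivAt_zpow m x (Or.inl hx)).mul hexp).congr_deriv ?_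
  rw [zpow_add_one₀ hx]
  ring

theorem tendsto_zpow_mul_exp_neg_sq_div_two (m : ℤ) :
    Tendsto (fun x : ℝ => x ^ m * exp (-x ^ 2 / 2)) atTop (𝓝 0) := by
  have h := (rpow_mul_exp_neg_mul_sq_isLittleO_exp_neg one_half_pos (m : ℝ)).tendsto_zero_of_tendsto
    (tendsto_exp_atBot.comp <| tendsto_id.const_mul_atTop_of_neg (neg_lt_zero.mpr one_half_pos))
  refine h.congr fun x => ?_
  rw [rpow_intCast]
  ring_nf

theorem zpow_add_one_eq_zpow_sub_one_mul_sq {x : ℝ} (hx : x ≠ 0) (m : ℤ) :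
    x ^ (m + 1) = x ^ (m - 1) * x ^ 2 := by
  rw [← zpow_natCast, ← zpow_add₀ hx]
  ring_nf

theorem zpow_mul_le_zpow_add_one {m : ℤ} {a x : ℝ} (ha : 0 < a) (hm : (m : ℝ) ≤ a ^ 2)
    (hax : a ≤ x) : m * x ^ (m - 1) ≤ x ^ (m + 1) := by
  have hx : 0 < x := ha.trans_le hax
  rw [zpow_add_one_eq_zpow_sub_one_mul_sq hx.ne', mul_comm]
  exact mul_le_mul_of_nonneg_left (hm.trans (pow_le_pow_left₀ ha.le hax 2)) (zpow_pos hx _).le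

theorem mul_zpow_add_one_le {m : ℤ} {a x : ℝ} (ha : 0 < a) (hm : -1 ≤ m) (hax : a ≤ x) :
    (1 - (m + 1) / a ^ 2) * x ^ (m + 1) ≤ x ^ (m + 1) - m * x ^ (m - 1) := by
  have hx : 0 < x := ha.trans_le hax
  have hm' : (0 : ℝ) ≤ m + 1 := by exact_mod_cast neg_le_iff_add_nonneg.mp hm
  have hscale : (m : ℝ) + 1 ≤ (m + 1) / a ^ 2 * x ^ 2 := by
    rw [div_mul_eq_mul_div, le_div_iff₀ (by positivity)]
    exact mul_le_mul_of_nonneg_left (pow_le_pow_left₀ ha.le hax 2) hm'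
  have hy := zpow_pos hx (m - 1)
  rw [zpow_add_one_eq_zpow_sub_one_mul_sq hx.ne']
  nlinarith [mul_le_mul_of_nonneg_right hscale hy.le]

theorem integral_Ioi_zpow_gaussian_deriv {m : ℤ} {a : ℝ} (ha : 0 < a) (hm : (m : ℝ) ≤ a ^ 2) :
    IntegrableOn (fun x : ℝ => (x ^ (m + 1) - m * x ^ (m - 1)) * exp (-x ^ 2 / 2)) (Ioi a) ∧
      ∫ x in Ioi a, (x ^ (m + 1) - m * x ^ (m - 1)) * exp (-x ^ 2 / 2) =
        a ^ m * exp (-a ^ 2 / 2) := by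
  have hderiv : ∀ x ∈ Ici a, HasDerivAt (fun x : ℝ => -(x ^ m * exp (-x ^ 2 / 2)))
      ((x ^ (m + 1) - m * x ^ (m - 1)) * exp (-x ^ 2 / 2)) x := fun x hx =>
    (hasDerivAt_zpow_mul_exp_neg_sq_div_two m (ha.trans_le hx).ne').neg.congr_deriv (by ring)
  have hnonneg : ∀ x ∈ Ioi a, 0 ≤ (x ^ (m + 1) - m * x ^ (m - 1)) * exp (-x ^ 2 / 2) :=
    fun x hx => mul_nonneg (sub_nonneg.mpr (zpow_mul_le_zpow_add_one ha hm hx.le)) (exp_pos _).le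
  have hlim := (tendsto_zpow_mul_exp_neg_sq_div_two m).neg
  rw [neg_zero] at hlim
  refine ⟨integrableOn_Ioi_deriv_of_nonneg' hderiv hnonneg hlim, ?_⟩
  rw [integral_Ioi_of_hasDerivAt_of_nonneg' hderiv hnonneg hlim]
  ring

/-- Gaussian tail bound: for `a > 0` and `k < a²`,
`∫_a^∞ x^k e^{−x²/2} dx ≤ a^{k−1} e^{−a²/2} (1 − k/a²)^{−1}`. -/
theorem gaussian_tail_bound (a : ℝ) (ha : 0 < a) (k : ℕ) (hk : (k : ℝ) < a ^ 2) :
    (∫ x in Set.Ici a, x ^ k * Real.exp (-x ^ 2 / 2)) ≤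
      a ^ ((k : ℤ) - 1) * Real.exp (-a ^ 2 / 2) * (1 - (k : ℝ) / a ^ 2)⁻¹ := by
  have hc : 0 < 1 - (k : ℝ) / a ^ 2 := sub_pos.mpr ((div_lt_one (by positivity)).mpr hk)
  have hk_succ : (((k : ℤ) - 1 : ℤ) : ℝ) + 1 = k := by push_cast; ring
  obtain ⟨hint, heq⟩ := integral_Ioi_zpow_gaussian_deriv (m := (k : ℤ) - 1) ha (by linarith)
  rw [integral_Ici_eq_integral_Ioi, ← div_eq_mul_inv, le_div_iff₀ hc, ← heq,
    ← integral_mul_const]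
  refine integral_mono_of_nonneg ?_ hint ?_ <;>
    filter_upwards [ae_restrict_mem measurableSet_Ioi] with x hx
  · have := ha.trans hx
    positivity
  · have key := mul_zpow_add_one_le (m := (k : ℤ) - 1) ha (by omega) hx.le
    rw [hk_succ, sub_add_cancel, zpow_natCast] at key
    rw [sub_add_cancel, zpow_natCast, mul_right_comm]
    exact mul_le_mul_of_nonneg_right (by linarith) (exp_pos _).le
end
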